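/- arXiv:1610.01491 — 5 statements merged into one kernel-verified Lean document; each statement's English description precedes it below -/
import Mathlib

section
/- For t > 0 and real β > -1, α > -1, the integral ∫₀^∞ t^(u+α) u^β / Γ(u+α+1) du converges (so the Volterra function μ(t,β,α) is well defined). -/
open MeasureTheory Set

/-! Integrating `e^{-s} s^{x-1}` over `[M, M+1]` gives `Γ(x) ≥ e^{-(M+1)} M^{x-1}`; with
`M = t e` this yields `t^x / Γ(x+1) ≤ C e^{-x}`, uniformly on `[α, ∞)` for `α > -1` after a
compactness argument on `[α, 0]`. The integrand is thus dominated by a multiple of the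
Euler integrand `e^{-u} u^β`, which is integrable on `(0, ∞)` because `β > -1`. -/

namespace Real

lemma continuousAt_Gamma_of_pos {s : ℝ} (hs : 0 < s) : ContinuousAt Gamma s :=
  (differentiableAt_Gamma fun m => ((neg_nonpos.2 m.cast_nonneg).trans_lt hs).ne').continuousAt

lemma continuousOn_rpow_div_Gamma_add_one {t : ℝ} (ht : t ≠ 0) :
    ContinuousOn (fun x => t ^ x / Gamma (x + 1)) (Ioi (-1)) := by
  intro x hx
  have hx1 : 0 < x + 1 := neg_lt_iff_pos_add.1 hx
  refine ContinuousAt.continuousWithinAt ?_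
  exact (continuousAt_const_rpow ht).div
    ((continuousAt_Gamma_of_pos hx1).comp (f := (· + 1)) (continuousAt_id.add continuousAt_const))
    (Gamma_pos_of_pos hx1).ne'

lemma exp_neg_mul_rpow_le_Gamma {M x : ℝ} (hM : 0 ≤ M) (hx : 1 ≤ x) :
    exp (-(M + 1)) * M ^ (x - 1) ≤ Gamma x := by
  have hsub : Ioc M (M + 1) ⊆ Ioi 0 := fun s hs => hM.trans_lt hs.1
  have hint := GammaIntegral_convergent (zero_lt_one.trans_le hx)
  calc exp (-(M + 1)) * M ^ (x - 1)
      = ∫ _ in Ioc M (M + 1), exp (-(M + 1)) * M ^ (x - 1) := by simp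
    _ ≤ ∫ s in Ioc M (M + 1), exp (-s) * s ^ (x - 1) := by
        refine setIntegral_mono_on (integrableOn_const (by simp)) (hint.mono_set hsub)
          measurableSet_Ioc fun s ⟨hMs, hsM⟩ => ?_
        gcongr
    _ ≤ ∫ s in Ioi 0, exp (-s) * s ^ (x - 1) := by
        refine setIntegral_mono_set hint ?_ hsub.eventuallyLE
        filter_upwards [ae_restrict_mem measurableSet_Ioi] with s hs
        exact mul_nonneg (exp_pos _).le (rpow_nonneg (le_of_lt hs) _)
    _ = Gamma x := (Gamma_eq_integral (zero_lt_one.trans_le hx)).symm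

lemma rpow_div_Gamma_add_one_le {t x : ℝ} (ht : 0 < t) (hx : 0 ≤ x) :
    t ^ x / Gamma (x + 1) ≤ exp (t * exp 1 + 1) * exp (-x) := by
  set M := t * exp 1
  have hM : 0 < M := by positivity
  have hΓ : exp (-(M + 1)) * M ^ x ≤ Gamma (x + 1) := by
    simpa using exp_neg_mul_rpow_le_Gamma hM.le (le_add_of_nonneg_left hx)
  calc t ^ x / Gamma (x + 1)
      ≤ t ^ x / (exp (-(M + 1)) * M ^ x) := by gcongr
    _ = exp (M + 1) * (t / M) ^ x := by
        rw [div_rpow ht.le hM.le, exp_neg]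
        field_simp
    _ = exp (M + 1) * exp (-x) := by
        rw [show t / M = exp (-1) by rw [exp_neg]; simp only [M]; field_simp, ← exp_mul]
        ring_nf

lemma exists_rpow_div_Gamma_add_one_le {t a : ℝ} (ht : 0 < t) (ha : -1 < a) :
    ∃ C, ∀ x, a ≤ x → t ^ x / Gamma (x + 1) ≤ C * exp (-x) := by
  have hcont : ContinuousOn (fun x => t ^ x / Gamma (x + 1) * exp x) (Icc a 0) :=
    ((continuousOn_rpow_div_Gamma_add_one ht.ne').mono
      fun x hx => ha.trans_le hx.1).mul continuous_exp.continuousOn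
  obtain ⟨C₀, hC₀⟩ := isCompact_Icc.exists_bound_of_continuousOn hcont
  refine ⟨max C₀ (exp (t * exp 1 + 1)), fun x hax => ?_⟩
  rcases le_total x 0 with hx | hx
  · calc t ^ x / Gamma (x + 1)
        = t ^ x / Gamma (x + 1) * exp x * exp (-x) := by
          rw [mul_assoc, ← exp_add, add_neg_cancel, exp_zero, mul_one]
      _ ≤ C₀ * exp (-x) := by
          gcongr
          exact (le_abs_self _).trans (hC₀ x ⟨hax, hx⟩)
      _ ≤ _ := by gcongr; exact le_max_left _ _
  · exact (rpow_div_Gamma_add_one_le ht hx).trans (by gcongr; exact le_max_right _ _)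

end Real

open Real in
/-- For `t > 0` and real `β > -1`, `α > -1`, the integral
`∫₀^∞ t^(u+α) u^β / Γ(u+α+1) du` converges, so the Volterra function
`μ(t,β,α)` is well defined. -/
theorem volterra_integrand_integrable (t β α : ℝ) (ht : 0 < t)
    (hβ : -1 < β) (hα : -1 < α) :
    IntegrableOn (fun u : ℝ => t ^ (u + α) * u ^ β / Real.Gamma (u + α + 1))
      (Ioi 0) := by
  obtain ⟨C, hC⟩ := exists_rpow_div_Gamma_add_one_le ht hα
  have hdom : IntegrableOn (fun u => C * exp (-α) * (exp (-u) * u ^ β)) (Ioi 0) := by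
    have h := GammaIntegral_convergent (neg_lt_iff_pos_add.1 hβ)
    rw [add_sub_cancel_right] at h
    exact h.const_mul _
  have hcont : ContinuousOn (fun u : ℝ => t ^ (u + α) / Gamma (u + α + 1) * u ^ β) (Ioi 0) :=
    ((continuousOn_rpow_div_Gamma_add_one ht.ne').comp (by fun_prop)
      fun u (hu : 0 < u) => show -1 < u + α by linarith).mul
      (continuousOn_id.rpow_const fun u (hu : 0 < u) => Or.inl hu.ne')
  simp_rw [mul_div_right_comm _ (_ ^ β)]
  refine hdom.mono' (hcont.aestronglyMeasurable measurableSet_Ioi) ?_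
  filter_upwards [ae_restrict_mem measurableSet_Ioi] with u (hu : 0 < u)
  have hΓ : 0 < Gamma (u + α + 1) := Gamma_pos_of_pos (by linarith)
  rw [norm_of_nonneg (by positivity)]
  calc t ^ (u + α) / Gamma (u + α + 1) * u ^ β
      ≤ C * exp (-(u + α)) * u ^ β := by gcongr; exact hC _ (by linarith)
    _ = C * exp (-α) * (exp (-u) * u ^ β) := by rw [neg_add, exp_add]; ring
end

section
/- For real s > 1 and β, α > -1, the Laplace transform of the Volterra function satisfies ∫₀^∞ e^(-st) μ(t,β,α) dt = 1 / (s^(α+1) (log s)^(β+1)). -/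
/-!
Expanding `μ`, the Laplace transform becomes a double integral of the nonnegative function
`e^(-st) t^(u+α) u^β / Γ(u+α+1)` over the quadrant, so Tonelli lets us integrate in `t` first.
That is a Gamma integral, equal to `u^β s^(-(u+α+1))`. Since `s^(-u) = e^(-u log s)` with
`log s > 0` exactly when `s > 1`, the remaining `u`-integral is again a Gamma integral, equal to
`Γ(β+1) (log s)^(-(β+1))`.
-/

open MeasureTheory Set Real

theorem integral_rpow_mul_exp_neg_mul {q b : ℝ} (hq : -1 < q) (hb : 0 < b) :
    ∫ x in Ioi (0 : ℝ), x ^ q * exp (-b * x) = b ^ (-(q + 1)) * Gamma (q + 1) := by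
  simpa using integral_rpow_mul_exp_neg_mul_rpow one_pos hq hb

theorem integrableOn_rpow_mul_exp_neg_mul {q b : ℝ} (hq : -1 < q) (hb : 0 < b) :
    IntegrableOn (fun x : ℝ => x ^ q * exp (-b * x)) (Ioi 0) := by
  simpa using integrableOn_rpow_mul_exp_neg_mul_rpow hq one_pos hb

theorem rpow_neg_eq_exp_neg_log_mul {s : ℝ} (hs : 0 < s) (u : ℝ) :
    s ^ (-u) = exp (-log s * u) := by
  rw [rpow_def_of_pos hs, mul_neg, neg_mul]

theorem integrable_prod_of_nonneg {α β : Type*} [MeasurableSpace α] [MeasurableSpace β]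
    {μ : Measure α} {ν : Measure β} [SFinite μ] [SFinite ν] {f : α → β → ℝ}
    (hf : AEStronglyMeasurable (Function.uncurry f) (μ.prod ν))
    (hf_nonneg : ∀ᵐ y ∂ν, 0 ≤ᵐ[μ] fun x => f x y)
    (hf_sec : ∀ᵐ y ∂ν, Integrable (fun x => f x y) μ)
    (hf_int : Integrable (fun y => ∫ x, f x y ∂μ) ν) :
    Integrable (Function.uncurry f) (μ.prod ν) := by
  refine (integrable_prod_iff' hf).2 ⟨hf_sec, hf_int.congr ?_⟩
  filter_upwards [hf_nonneg] with y hy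
  refine integral_congr_ae ?_
  filter_upwards [hy] with x hx
  exact (norm_of_nonneg hx).symm

theorem integral_rpow_mul_rpow_neg {s β : ℝ} (hs : 1 < s) (hβ : -1 < β) :
    ∫ u in Ioi (0 : ℝ), u ^ β * s ^ (-u) = log s ^ (-(β + 1)) * Gamma (β + 1) := by
  simp_rw [rpow_neg_eq_exp_neg_log_mul (zero_lt_one.trans hs)]
  exact integral_rpow_mul_exp_neg_mul hβ (log_pos hs)

theorem integrableOn_rpow_mul_rpow_neg {s β : ℝ} (hs : 1 < s) (hβ : -1 < β) :
    IntegrableOn (fun u : ℝ => u ^ β * s ^ (-u)) (Ioi 0) := by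
  simp_rw [rpow_neg_eq_exp_neg_log_mul (zero_lt_one.trans hs)]
  exact integrableOn_rpow_mul_exp_neg_mul hβ (log_pos hs)

noncomputable def volterraLaplaceKernel (s α β t u : ℝ) : ℝ :=
  exp (-s * t) * (t ^ (u + α) * u ^ β / Gamma (u + α + 1))

section volterraLaplaceKernel

variable {s α β : ℝ}

theorem volterraLaplaceKernel_eq (s α β t u : ℝ) :
    volterraLaplaceKernel s α β t u =
      u ^ β / Gamma (u + α + 1) * (t ^ (u + α) * exp (-s * t)) := by
  unfold volterraLaplaceKernel; ring

theorem integrableOn_volterraLaplaceKernel_left (hs : 0 < s) {u : ℝ} (hu : -1 < u + α) :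
    IntegrableOn (fun t => volterraLaplaceKernel s α β t u) (Ioi 0) := by
  simp_rw [volterraLaplaceKernel_eq]
  exact (integrableOn_rpow_mul_exp_neg_mul hu hs).const_mul _

theorem integral_volterraLaplaceKernel_left (hs : 0 < s) {u : ℝ} (hu : -1 < u + α) :
    ∫ t in Ioi (0 : ℝ), volterraLaplaceKernel s α β t u =
      s ^ (-(α + 1)) * (u ^ β * s ^ (-u)) := by
  have hΓ : Gamma (u + α + 1) ≠ 0 := (Gamma_pos_of_pos (by linarith)).ne'
  simp_rw [volterraLaplaceKernel_eq, integral_const_mul, integral_rpow_mul_exp_neg_mul hu hs,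
    show -(u + α + 1) = -(α + 1) + -u by ring, rpow_add hs]
  field_simp

theorem volterraLaplaceKernel_nonneg (hα : -1 < α) {t u : ℝ} (ht : 0 ≤ t) (hu : 0 ≤ u) :
    0 ≤ volterraLaplaceKernel s α β t u := by
  have := Gamma_nonneg_of_nonneg (s := u + α + 1) (by linarith)
  unfold volterraLaplaceKernel
  positivity

theorem continuousOn_volterraLaplaceKernel (hα : -1 < α) :
    ContinuousOn (Function.uncurry (volterraLaplaceKernel s α β)) (Ioi 0 ×ˢ Ioi 0) := by
  rintro ⟨t, u⟩ ⟨ht, hu⟩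
  simp only [mem_Ioi] at ht hu
  have hΓ : 0 < u + α + 1 := by linarith
  have hGamma : ContinuousAt Gamma (u + α + 1) :=
    (differentiableAt_Gamma fun m => by linarith [(m.cast_nonneg : (0 : ℝ) ≤ m)]).continuousAt
  have hrpow : ContinuousAt (fun p : ℝ × ℝ => p.1 ^ (p.2 + α)) (t, u) :=
    continuousAt_fst.rpow (by fun_prop) (Or.inl ht.ne')
  refine ContinuousAt.continuousWithinAt ?_
  unfold Function.uncurry volterraLaplaceKernel
  fun_prop (disch := first | positivity | exact Or.inl hu.ne')

theorem integrable_volterraLaplaceKernel (hs : 1 < s) (hβ : -1 < β) (hα : -1 < α) :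
    Integrable (Function.uncurry (volterraLaplaceKernel s α β))
      ((volume.restrict (Ioi 0)).prod (volume.restrict (Ioi 0))) := by
  have hs0 : 0 < s := zero_lt_one.trans hs
  have hα_add {u : ℝ} (hu : u ∈ Ioi 0) : -1 < u + α := by simp only [mem_Ioi] at hu; linarith
  refine integrable_prod_of_nonneg ?_ ?_ ?_ ?_
  · rw [Measure.prod_restrict]
    exact (continuousOn_volterraLaplaceKernel hα).aestronglyMeasurable
      (measurableSet_Ioi.prod measurableSet_Ioi)
  · filter_upwards [ae_restrict_mem measurableSet_Ioi] with u hu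
    filter_upwards [ae_restrict_mem measurableSet_Ioi] with t ht
    exact volterraLaplaceKernel_nonneg hα (le_of_lt ht) (le_of_lt hu)
  · filter_upwards [ae_restrict_mem measurableSet_Ioi] with u hu
    exact integrableOn_volterraLaplaceKernel_left hs0 (hα_add hu)
  · refine IntegrableOn.congr_fun ((integrableOn_rpow_mul_rpow_neg hs hβ).const_mul _)
      (fun u hu => (integral_volterraLaplaceKernel_left hs0 (hα_add hu)).symm) measurableSet_Ioi

end volterraLaplaceKernel

/-- For real `s > 1` and `β, α > -1`, the Laplace transform of the
Volterra function `μ(t,β,α) = (1/Γ(β+1)) ∫₀^∞ t^(u+α) u^β / Γ(u+α+1) du`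
satisfies `∫₀^∞ e^(-st) μ(t,β,α) dt = 1 / (s^(α+1) (log s)^(β+1))`. -/
theorem volterra_laplace_transform (s β α : ℝ) (hs : 1 < s)
    (hβ : -1 < β) (hα : -1 < α) :
    ∫ t in Ioi (0 : ℝ), Real.exp (-s * t) *
        ((1 / Real.Gamma (β + 1)) *
          ∫ u in Ioi (0 : ℝ), t ^ (u + α) * u ^ β / Real.Gamma (u + α + 1)) =
      1 / (s ^ (α + 1) * Real.log s ^ (β + 1)) := by
  have hs0 : 0 < s := zero_lt_one.trans hs
  have hΓ : Gamma (β + 1) ≠ 0 := (Gamma_pos_of_pos (by linarith)).ne'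
  calc _ = 1 / Gamma (β + 1) *
        ∫ t in Ioi (0 : ℝ), ∫ u in Ioi (0 : ℝ), volterraLaplaceKernel s α β t u := by
        simp_rw [volterraLaplaceKernel, integral_const_mul, mul_left_comm (exp _),
          integral_const_mul]
    _ = 1 / Gamma (β + 1) *
        ∫ u in Ioi (0 : ℝ), ∫ t in Ioi (0 : ℝ), volterraLaplaceKernel s α β t u := by
        rw [integral_integral_swap (integrable_volterraLaplaceKernel hs hβ hα)]
    _ = 1 / Gamma (β + 1) * ∫ u in Ioi (0 : ℝ), s ^ (-(α + 1)) * (u ^ β * s ^ (-u)) := by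
        congr 1
        refine setIntegral_congr_fun measurableSet_Ioi fun u hu => ?_
        exact integral_volterraLaplaceKernel_left hs0 (by simp only [mem_Ioi] at hu; linarith)
    _ = 1 / (s ^ (α + 1) * log s ^ (β + 1)) := by
        rw [integral_const_mul, integral_rpow_mul_rpow_neg hs hβ, rpow_neg hs0.le,
          rpow_neg (log_pos hs).le]
        field_simp
end

section
/- For k = 1 and the Laplace transform M(s) = 1/(s^(α+1)(Log s)²), the residue of e^(st) M(s) at s = 1 equals e^t (t − α). -/
open Filter Topology Complex

noncomputable def Hfun : ℂ → ℂ := fun z => if z = 1 then 1 else Complex.log z / (z - 1)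

lemma log_eq_Hfun (z : ℂ) : Complex.log z = (z - 1) * Hfun z := by
  unfold Hfun
  by_cases h : z = 1
  · simp [h]
  · rw [if_neg h, mul_comm, div_mul_cancel₀ _ (sub_ne_zero.mpr h)]

lemma Hfun_tendsto : Tendsto Hfun (𝓝[≠] (1:ℂ)) (𝓝 1) := by
  have hd : HasDerivAt Complex.log 1 1 := by
    simpa using Complex.hasDerivAt_log Complex.one_mem_slitPlane
  have := hasDerivAt_iff_tendsto_slope.mp hd
  refine this.congr' ?_
  filter_upwards [self_mem_nhdsWithin] with z hz
  have hz' : z ≠ 1 := hz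
  simp only [slope, Hfun, if_neg hz', Complex.log_one, vsub_eq_sub, sub_zero, smul_eq_mul]
  rw [div_eq_inv_mul]

lemma Hfun_continuousAt : ContinuousAt Hfun 1 := by
  rw [← continuousWithinAt_compl_self]
  have : Hfun 1 = 1 := by simp [Hfun]
  unfold ContinuousWithinAt
  rw [this]
  exact Hfun_tendsto

lemma Hfun_analyticAt : AnalyticAt ℂ Hfun 1 := by
  apply Complex.analyticAt_of_differentiable_on_punctured_nhds_of_continuousAt _
    Hfun_continuousAt
  have hmem : ∀ᶠ z in 𝓝[≠] (1:ℂ), z ∈ Complex.slitPlane ∧ z ≠ 1 := by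
    filter_upwards [nhdsWithin_le_nhds (Complex.isOpen_slitPlane.mem_nhds
      Complex.one_mem_slitPlane), self_mem_nhdsWithin] with z h1 h2
    exact ⟨h1, h2⟩
  filter_upwards [hmem] with z ⟨hz, hz1⟩
  have heq : Hfun =ᶠ[𝓝 z] fun w => Complex.log w / (w - 1) := by
    filter_upwards [isOpen_compl_singleton.mem_nhds (by simpa using hz1 : z ∈ ({1}ᶜ : Set ℂ))]
      with w hw
    simp [Hfun, if_neg (by simpa using hw : w ≠ 1)]
  refine DifferentiableAt.congr_of_eventuallyEq ?_ heq
  exact (Complex.differentiableAt_log hz).div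
    ((differentiableAt_id).sub (differentiableAt_const 1)) (sub_ne_zero.mpr hz1)

lemma Hfun_deriv_analyticAt : AnalyticAt ℂ (deriv Hfun) 1 := by
  obtain ⟨s, hs, ha⟩ := Hfun_analyticAt.exists_mem_nhds_analyticOnNhd
  exact ha.deriv 1 (mem_of_mem_nhds hs)

lemma Hfun_deriv_one : deriv Hfun 1 = -(1/2) := by
  have hH := Hfun_analyticAt
  have hH' : AnalyticAt ℂ (deriv Hfun) 1 := Hfun_deriv_analyticAt
  have key : (fun z : ℂ => z⁻¹) =ᶠ[𝓝 (1:ℂ)] fun z => Hfun z + (z - 1) * deriv Hfun z := by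
    filter_upwards [Complex.isOpen_slitPlane.mem_nhds Complex.one_mem_slitPlane,
      hH.eventually_analyticAt] with z hz hza
    have h1 : deriv Complex.log z = z⁻¹ := (Complex.hasDerivAt_log hz).deriv
    have h2 : HasDerivAt (fun w => (w - 1) * Hfun w)
        (1 * Hfun z + (z - 1) * deriv Hfun z) z :=
      ((hasDerivAt_id z).sub_const 1).mul hza.differentiableAt.hasDerivAt
    have h3 : Complex.log = fun w => (w - 1) * Hfun w := funext log_eq_Hfun
    rw [← h1, h3, h2.deriv, one_mul]
  have hde := key.deriv_eq
  have hL : deriv (fun z : ℂ => z⁻¹) 1 = -1 := by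
    rw [(hasDerivAt_inv one_ne_zero).deriv]; norm_num
  have hR : HasDerivAt (fun z : ℂ => Hfun z + (z - 1) * deriv Hfun z)
      (deriv Hfun 1 + (1 * deriv Hfun 1 + (1 - 1) * deriv (deriv Hfun) 1)) 1 :=
    (hH.differentiableAt.hasDerivAt).add
      (((hasDerivAt_id 1).sub_const 1).mul hH'.differentiableAt.hasDerivAt)
  rw [hL, hR.deriv] at hde
  linear_combination (-1/2 : ℂ) * hde

/-- For `k = 1` and `M(s) = 1/(s^(α+1) (Log s)²)`, the residue of
`e^(st) M(s)` at `s = 1`, i.e. `lim_{s→1} d/ds [ e^{st} (s−1)² M(s) ]`,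
equals `e^t (t − α)`. -/
theorem volterra_residue_k1 (α t : ℝ) :
    Tendsto
      (fun s : ℂ =>
        deriv
          (fun z : ℂ =>
            Complex.exp (z * t) * (z - 1) ^ 2 /
              (z ^ ((α : ℂ) + 1) * Complex.log z ^ 2)) s)
      (𝓝[≠] 1) (𝓝 (Complex.exp t * ((t : ℂ) - α))) := by
  set f : ℂ → ℂ := fun z =>
    Complex.exp (z * t) * (z - 1) ^ 2 / (z ^ ((α : ℂ) + 1) * Complex.log z ^ 2) with hfdef
  set F : ℂ → ℂ := fun z => Complex.exp (z * t) / (z ^ ((α : ℂ) + 1) * Hfun z ^ 2) with hFdef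
  have hone : (1:ℂ) ∈ Complex.slitPlane := Complex.one_mem_slitPlane
  have hH1 : Hfun 1 = 1 := by simp [Hfun]
  -- analyticity of F at 1
  have hden : AnalyticAt ℂ (fun z : ℂ => z ^ ((α:ℂ)+1) * Hfun z ^ 2) 1 :=
    ((analyticAt_id.cpow analyticAt_const (by simpa using hone)).mul
      (Hfun_analyticAt.pow 2))
  have hden1 : (1:ℂ) ^ ((α:ℂ)+1) * Hfun 1 ^ 2 = 1 := by
    rw [Complex.one_cpow, hH1]; ring
  have hexp : AnalyticAt ℂ (fun z : ℂ => Complex.exp (z * (t:ℂ))) 1 :=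
    (analyticAt_id.mul analyticAt_const).cexp
  have hF : AnalyticAt ℂ F 1 := hexp.div hden (by rw [hden1]; exact one_ne_zero)
  -- derivative of F at 1
  have hE : HasDerivAt (fun z : ℂ => Complex.exp (z * (t:ℂ)))
      (Complex.exp ((1:ℂ) * t) * (1 * t)) 1 := ((hasDerivAt_id 1).mul_const (t:ℂ)).cexp
  have hP : HasDerivAt (fun z : ℂ => z ^ ((α:ℂ)+1))
      (((α:ℂ)+1) * (1:ℂ) ^ (((α:ℂ)+1)-1) * 1) 1 :=
    (hasDerivAt_id 1).cpow_const (by simpa using hone)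
  have hHd : HasDerivAt Hfun (-(1/2)) 1 := by
    have := Hfun_analyticAt.differentiableAt.hasDerivAt
    rwa [Hfun_deriv_one] at this
  have hH2 : HasDerivAt (fun z : ℂ => Hfun z ^ 2)
      ((2:ℕ) * Hfun 1 ^ (2-1) * (-(1/2))) 1 := hHd.pow 2
  have hD : HasDerivAt (fun z : ℂ => z ^ ((α:ℂ)+1) * Hfun z ^ 2)
      ((((α:ℂ)+1) * (1:ℂ) ^ (((α:ℂ)+1)-1) * 1) * Hfun 1 ^ 2 +
        (1:ℂ) ^ ((α:ℂ)+1) * ((2:ℕ) * Hfun 1 ^ (2-1) * (-(1/2)))) 1 := hP.mul hH2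
  have hFd : HasDerivAt F
      ((Complex.exp ((1:ℂ) * t) * (1 * t) * ((1:ℂ) ^ ((α:ℂ)+1) * Hfun 1 ^ 2) -
        Complex.exp ((1:ℂ) * t) *
        ((((α:ℂ)+1) * (1:ℂ) ^ (((α:ℂ)+1)-1) * 1) * Hfun 1 ^ 2 +
          (1:ℂ) ^ ((α:ℂ)+1) * ((2:ℕ) * Hfun 1 ^ (2-1) * (-(1/2))))) /
        ((1:ℂ) ^ ((α:ℂ)+1) * Hfun 1 ^ 2) ^ 2) 1 :=
    hE.div hD (by rw [hden1]; exact one_ne_zero)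
  have hFval : deriv F 1 = Complex.exp t * ((t:ℂ) - α) := by
    rw [hFd.deriv, hH1]
    simp only [Complex.one_cpow]
    push_cast
    ring
  -- f = F on a punctured neighborhood
  have hne0 : ∀ᶠ z in 𝓝 (1:ℂ), Hfun z ≠ 0 :=
    Hfun_continuousAt.eventually_ne (by rw [hH1]; exact one_ne_zero)
  have hz0 : ∀ᶠ z in 𝓝 (1:ℂ), z ≠ 0 := by
    filter_upwards [isOpen_compl_singleton.mem_nhds
      (Set.mem_compl_singleton_iff.mpr (one_ne_zero : (1:ℂ) ≠ 0))] with z hz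
    exact hz
  have hfeq : ∀ᶠ z in 𝓝[≠] (1:ℂ), f z = F z := by
    filter_upwards [nhdsWithin_le_nhds hne0, self_mem_nhdsWithin,
      nhdsWithin_le_nhds hz0] with z hH0 hz1 hz0'
    have hz1' : z ≠ 1 := hz1
    have hcp : z ^ ((α:ℂ)+1) ≠ 0 := by
      rw [Complex.cpow_def_of_ne_zero hz0']; exact Complex.exp_ne_zero _
    have hsub : z - 1 ≠ 0 := sub_ne_zero.mpr hz1'
    simp only [hfdef, hFdef, log_eq_Hfun z]
    field_simp
  have hderiv_eq : (deriv F) =ᶠ[𝓝[≠] (1:ℂ)] (fun s => deriv f s) := by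
    obtain ⟨U, hUo, hU1, hUsub⟩ := mem_nhdsWithin.mp hfeq
    filter_upwards [nhdsWithin_le_nhds (hUo.mem_nhds hU1), self_mem_nhdsWithin]
      with z hzU hz1
    have hev : f =ᶠ[𝓝 z] F :=
      eventuallyEq_of_mem ((hUo.inter isOpen_compl_singleton).mem_nhds ⟨hzU, hz1⟩)
        (fun w hw => hUsub ⟨hw.1, hw.2⟩)
    exact hev.deriv_eq.symm
  have hcont : Tendsto (deriv F) (𝓝 (1:ℂ)) (𝓝 (deriv F 1)) := by
    obtain ⟨s, hs, ha⟩ := hF.exists_mem_nhds_analyticOnNhd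
    exact ((ha.deriv 1 (mem_of_mem_nhds hs)).differentiableAt.continuousAt)
  rw [← hFval]
  exact (hcont.mono_left nhdsWithin_le_nhds).congr' hderiv_eq
end

section
/- For k = 2 and the Laplace transform M(s) = 1/(s^(α+1)(Log s)³), the residue of e^(st) M(s) at s = 1 equals (e^t/2) ( t² − (2α−1) t + α² ). -/
open Filter Topology

/-!
Near `s = 1` write `Log s = (s - 1) L(s)` with `L = dslope Log 1` analytic and `L(1) = 1`. On a
punctured neighbourhood of `1` the function being differentiated is then `exp ∘ h` with
`h(s) = s t - (α + 1) Log s - 3 Log L(s)` analytic at `1`, so the limit is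
`(exp ∘ h)''(1) / 2 = e^{h(1)} (h'(1)² + h''(1)) / 2`. The Taylor coefficients of `L` at `1` are
those of `Log` shifted by one, so `L'(1) = -1/2` and `L''(1) = 2/3`; hence `h(1) = t`,
`h'(1) = t - α + 1/2` and `h''(1) = α - 1/4`.
-/

section General

variable {𝕜 : Type*} [NontriviallyNormedField 𝕜] [CompleteSpace 𝕜]

theorem tendsto_iteratedDeriv_nhdsNE_of_eventuallyEq {f g : 𝕜 → 𝕜} {a : 𝕜}
    (hfg : f =ᶠ[𝓝[≠] a] g) (hg : AnalyticAt 𝕜 g a) (n : ℕ) :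
    Tendsto (iteratedDeriv n f) (𝓝[≠] a) (𝓝 (iteratedDeriv n g a)) := by
  have hcont : ContinuousAt (iteratedDeriv n g) a := by
    rw [iteratedDeriv_eq_iterate]
    exact (hg.iterated_deriv n).continuousAt
  refine (hcont.tendsto.mono_left nhdsWithin_le_nhds).congr' ?_
  filter_upwards [eventually_nhdsNE_eventually_nhds_iff.mpr hfg] with z (hz : f =ᶠ[𝓝 z] g)
  exact (hz.iteratedDeriv_eq n).symm

theorem iteratedDeriv_dslope_self [CharZero 𝕜] {f : 𝕜 → 𝕜} {a : 𝕜} (hf : AnalyticAt 𝕜 f a)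
    (k : ℕ) : iteratedDeriv k (dslope f a) a = iteratedDeriv (k + 1) f a / (k + 1) := by
  have hslope := hf.hasFPowerSeriesAt.has_fpower_series_dslope_fslope
  have hcoeff := congr_arg (FormalMultilinearSeries.coeff · k)
    (hslope.eq_formalMultilinearSeries hslope.analyticAt.hasFPowerSeriesAt)
  simp only [FormalMultilinearSeries.coeff_fslope, FormalMultilinearSeries.coeff_ofScalars,
    Nat.factorial_succ, Nat.cast_mul] at hcoeff
  have hk : (k.factorial : 𝕜) ≠ 0 := Nat.cast_ne_zero.mpr k.factorial_ne_zero
  have hk1 : (k + 1 : 𝕜) ≠ 0 := Nat.cast_add_one_ne_zero k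
  field_simp at hcoeff
  rw [hcoeff, Nat.cast_succ]
  field_simp

theorem iteratedDeriv_two_comp {φ g : 𝕜 → 𝕜} {a : 𝕜} (hφ : AnalyticAt 𝕜 φ (g a))
    (hg : AnalyticAt 𝕜 g a) :
    iteratedDeriv 2 (φ ∘ g) a =
      iteratedDeriv 2 φ (g a) * deriv g a ^ 2 + deriv φ (g a) * iteratedDeriv 2 g a := by
  have hchain : deriv (φ ∘ g) =ᶠ[𝓝 a] fun z => deriv φ (g z) * deriv g z := by
    filter_upwards [hg.eventually_analyticAt,
      hg.continuousAt.eventually hφ.eventually_analyticAt] with z hgz hφz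
    exact deriv_comp z hφz.differentiableAt hgz.differentiableAt
  have hderiv : HasDerivAt (fun z => deriv φ (g z) * deriv g z)
      (deriv (deriv φ) (g a) * deriv g a * deriv g a + deriv φ (g a) * deriv (deriv g) a) a :=
    (hφ.deriv.differentiableAt.hasDerivAt.comp a hg.differentiableAt.hasDerivAt).mul
      hg.deriv.differentiableAt.hasDerivAt
  simp only [iteratedDeriv_succ, iteratedDeriv_zero]
  rw [hchain.deriv_eq, hderiv.deriv]
  ring

end General

open Complex

theorem log_eq_sub_one_mul_dslope_log_one (z : ℂ) : log z = (z - 1) * dslope log 1 z := by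
  simpa [log_one] using (sub_smul_dslope log 1 z).symm

theorem analyticAt_dslope_log_one : AnalyticAt ℂ (dslope log 1) 1 :=
  (analyticAt_clog one_mem_slitPlane).hasFPowerSeriesAt.has_fpower_series_dslope_fslope.analyticAt

theorem iteratedDeriv_dslope_log_one (k : ℕ) :
    iteratedDeriv k (dslope log 1) 1 = (-1) ^ k * k.factorial / (k + 1) := by
  rw [iteratedDeriv_dslope_self (analyticAt_clog one_mem_slitPlane),
    iteratedDeriv_succ_log one_mem_slitPlane, one_zpow, mul_one]

theorem dslope_log_one_one : dslope log 1 1 = 1 := by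
  simpa using iteratedDeriv_dslope_log_one 0

theorem deriv_dslope_log_one : deriv (dslope log 1) 1 = -1 / 2 := by
  rw [← iteratedDeriv_one, iteratedDeriv_dslope_log_one]
  norm_num

theorem analyticAt_log_dslope_log_one_one : AnalyticAt ℂ log (dslope log 1 1) :=
  analyticAt_clog (by rw [dslope_log_one_one]; exact one_mem_slitPlane)

noncomputable def residueExponent (α t : ℝ) (z : ℂ) : ℂ :=
  z * t - (α + 1) * log z - 3 * log (dslope log 1 z)

theorem eventuallyEq_exp_residueExponent (α t : ℝ) :
    (fun z : ℂ => exp (z * t) * (z - 1) ^ 3 / (z ^ ((α : ℂ) + 1) * log z ^ 3))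
      =ᶠ[𝓝[≠] 1] exp ∘ residueExponent α t := by
  have hL : ∀ᶠ z in 𝓝 (1 : ℂ), dslope log 1 z ≠ 0 :=
    analyticAt_dslope_log_one.continuousAt.eventually_ne
      (by rw [dslope_log_one_one]; exact one_ne_zero)
  filter_upwards [nhdsWithin_le_nhds hL, nhdsWithin_le_nhds (eventually_ne_nhds one_ne_zero),
    self_mem_nhdsWithin] with z hLz hz (hz1 : z ≠ 1)
  have hcube : exp (3 * log (dslope log 1 z)) = dslope log 1 z ^ 3 := by
    simpa [exp_log hLz] using exp_nat_mul (log (dslope log 1 z)) 3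
  have hpow : exp ((α + 1) * log z) = z ^ ((α : ℂ) + 1) := by
    rw [cpow_def_of_ne_zero hz, mul_comm]
  rw [Function.comp_apply, residueExponent, exp_sub, exp_sub, hcube, hpow,
    log_eq_sub_one_mul_dslope_log_one z]
  field_simp

theorem analyticAt_residueExponent (α t : ℝ) : AnalyticAt ℂ (residueExponent α t) 1 :=
  ((analyticAt_id.mul analyticAt_const).sub
    (analyticAt_const.mul (analyticAt_clog one_mem_slitPlane))).sub
    (analyticAt_const.mul (analyticAt_log_dslope_log_one_one.comp analyticAt_dslope_log_one))

theorem residueExponent_one (α t : ℝ) : residueExponent α t 1 = t := by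
  rw [residueExponent, dslope_log_one_one]
  simp

theorem iteratedDeriv_residueExponent_one (α t : ℝ) (n : ℕ) :
    iteratedDeriv n (residueExponent α t) 1 =
      iteratedDeriv n id 1 * t - (α + 1) * iteratedDeriv n log 1
        - 3 * iteratedDeriv n (log ∘ dslope log 1) 1 := by
  have hlog := (analyticAt_clog one_mem_slitPlane).contDiffAt (n := n)
  have hlogL :=
    (analyticAt_log_dslope_log_one_one.comp analyticAt_dslope_log_one).contDiffAt (n := n)
  unfold residueExponent
  rw [iteratedDeriv_fun_sub (by fun_prop) (by fun_prop),
    iteratedDeriv_fun_sub (by fun_prop) (by fun_prop), iteratedDeriv_mul_const_field,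
    iteratedDeriv_const_mul_field, iteratedDeriv_const_mul_field]
  rfl

theorem deriv_residueExponent_one (α t : ℝ) : deriv (residueExponent α t) 1 = t - α + 1 / 2 := by
  have h := iteratedDeriv_residueExponent_one α t 1
  simp only [iteratedDeriv_one] at h
  rw [h, deriv_comp _ analyticAt_log_dslope_log_one_one.differentiableAt
    analyticAt_dslope_log_one.differentiableAt, deriv_dslope_log_one, dslope_log_one_one,
    deriv_id, Complex.deriv_log one_mem_slitPlane]
  ring

theorem iteratedDeriv_two_residueExponent_one (α t : ℝ) :
    iteratedDeriv 2 (residueExponent α t) 1 = α - 1 / 4 := by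
  rw [iteratedDeriv_residueExponent_one,
    iteratedDeriv_two_comp analyticAt_log_dslope_log_one_one analyticAt_dslope_log_one,
    iteratedDeriv_dslope_log_one, deriv_dslope_log_one, dslope_log_one_one,
    iteratedDeriv_succ_log one_mem_slitPlane, Complex.deriv_log one_mem_slitPlane,
    iteratedDeriv_id]
  norm_num
  ring

theorem iteratedDeriv_two_exp_residueExponent_one (α t : ℝ) :
    iteratedDeriv 2 (exp ∘ residueExponent α t) 1 =
      exp t * ((t : ℂ) ^ 2 - (2 * (α : ℂ) - 1) * t + (α : ℂ) ^ 2) := by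
  rw [iteratedDeriv_two_comp analyticAt_cexp (analyticAt_residueExponent α t),
    iteratedDeriv_eq_iterate, iter_deriv_exp, Complex.deriv_exp, residueExponent_one,
    deriv_residueExponent_one, iteratedDeriv_two_residueExponent_one]
  ring

/-- For `k = 2` and `M(s) = 1/(s^(α+1) (Log s)³)`, the residue of
`e^(st) M(s)` at `s = 1`, i.e. `lim_{s→1} (1/2!) d²/ds² [ e^{st} (s−1)³ M(s) ]`,
equals `(e^t/2) (t² − (2α−1) t + α²)`. -/
theorem volterra_residue_k2 (α t : ℝ) :
    Tendsto
      (fun s : ℂ =>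
        (1 / (2 : ℂ)) *
          iteratedDeriv 2
            (fun z : ℂ =>
              Complex.exp (z * t) * (z - 1) ^ 3 /
                (z ^ ((α : ℂ) + 1) * Complex.log z ^ 3)) s)
      (𝓝[≠] 1)
      (𝓝 (Complex.exp t / 2 *
        ((t : ℂ) ^ 2 - (2 * (α : ℂ) - 1) * t + (α : ℂ) ^ 2))) := by
  have hlim := tendsto_iteratedDeriv_nhdsNE_of_eventuallyEq (eventuallyEq_exp_residueExponent α t)
    (analyticAt_cexp.comp (analyticAt_residueExponent α t)) 2
  rw [iteratedDeriv_two_exp_residueExponent_one] at hlim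
  convert hlim.const_mul (1 / 2 : ℂ) using 2
  ring
end

section
/- For n ∈ ℕ and z > 0, the analytically continued Volterra function at β = −n−1 satisfies μ(z, −n−1, α) = (−1)^n (d^n/dx^n)[ z^{α+x} / Γ(α+x+1) ] evaluated at x = 0. -/
/-!
By the fundamental theorem of calculus on `[0, ∞)`, the identity says `f⁽ⁿ⁾(0) = -∫₀^∞ f⁽ⁿ⁺¹⁾`
for `f x = z^(α+x) / Γ(α+x+1)`, so it suffices that `f⁽ⁿ⁾` and `f⁽ⁿ⁺¹⁾` decay like `exp (-x)`.
Both are real parts of derivatives of the entire function `w ↦ z^(α+w) / Γ(α+w+1)`, which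
Cauchy's estimate on the unit circle around `x` bounds by `z^(α+x) / Γ(α+x)` up to a constant,
thanks to `Γ(Re s) ≤ exp (π² (Im s)² / 12) ‖Γ(s)‖` (Euler's limit formula and `ζ(2) = π²/6`).
Finally `Γ` outgrows every exponential.
-/

open MeasureTheory Set Real Filter Topology Asymptotics
open scoped Nat

theorem sum_range_one_div_add_natCast_sq_le {x : ℝ} (hx : 1 ≤ x) (N : ℕ) :
    ∑ j ∈ Finset.range N, 1 / (x + j) ^ 2 ≤ π ^ 2 / 6 := by
  calc ∑ j ∈ Finset.range N, 1 / (x + j) ^ 2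
      ≤ ∑ j ∈ Finset.range N, 1 / ((j + 1 : ℕ) : ℝ) ^ 2 := by
        gcongr with j
        push_cast
        linarith
    _ = ∑ i ∈ Finset.range (N + 1), 1 / (i : ℝ) ^ 2 := by simp [Finset.sum_range_succ']
    _ ≤ π ^ 2 / 6 := sum_le_hasSum _ (fun _ _ => by positivity) hasSum_zeta_two

namespace Complex

theorem norm_add_natCast_sq_le (s : ℂ) (j : ℕ) (h : 0 < s.re + j) :
    ‖s + j‖ ^ 2 ≤ (s.re + j) ^ 2 * Real.exp (s.im ^ 2 / (s.re + j) ^ 2) := by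
  have hsq : ‖s + j‖ ^ 2 = (s.re + j) ^ 2 * (s.im ^ 2 / (s.re + j) ^ 2 + 1) := by
    rw [Complex.sq_norm, normSq_apply]
    field_simp
    simp only [add_re, natCast_re, add_im, natCast_im, add_zero]
    ring
  rw [hsq]
  gcongr
  exact Real.add_one_le_exp _

theorem prod_norm_add_natCast_le {s : ℂ} (hs : 1 ≤ s.re) (N : ℕ) :
    ∏ j ∈ Finset.range N, ‖s + j‖ ≤
      Real.exp (s.im ^ 2 * π ^ 2 / 12) * ∏ j ∈ Finset.range N, (s.re + j) := by
  have hpos : ∀ j : ℕ, 0 < s.re + j := fun j => by positivity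
  refine le_of_pow_le_pow_left₀ two_ne_zero (by positivity) ?_
  calc (∏ j ∈ Finset.range N, ‖s + j‖) ^ 2
      = ∏ j ∈ Finset.range N, ‖s + j‖ ^ 2 := (Finset.prod_pow _ _ _).symm
    _ ≤ ∏ j ∈ Finset.range N, (s.re + j) ^ 2 * Real.exp (s.im ^ 2 / (s.re + j) ^ 2) :=
        Finset.prod_le_prod (fun _ _ => by positivity)
          (fun j _ => norm_add_natCast_sq_le s j (hpos j))
    _ = (∏ j ∈ Finset.range N, (s.re + j)) ^ 2 *
          Real.exp (s.im ^ 2 * ∑ j ∈ Finset.range N, 1 / (s.re + j) ^ 2) := by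
        rw [Finset.prod_mul_distrib, Finset.prod_pow, ← Real.exp_sum, Finset.mul_sum]
        simp only [mul_one_div]
    _ ≤ (∏ j ∈ Finset.range N, (s.re + j)) ^ 2 * Real.exp (s.im ^ 2 * (π ^ 2 / 6)) := by
        gcongr
        exact sum_range_one_div_add_natCast_sq_le hs N
    _ = (Real.exp (s.im ^ 2 * π ^ 2 / 12) * ∏ j ∈ Finset.range N, (s.re + j)) ^ 2 := by
        rw [mul_pow, ← Real.exp_nat_mul]
        ring_nf

theorem Gamma_re_le_exp_mul_norm_Gamma {s : ℂ} (hs : 1 ≤ s.re) :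
    Real.Gamma s.re ≤ Real.exp (s.im ^ 2 * π ^ 2 / 12) * ‖Gamma s‖ := by
  refine le_of_tendsto_of_tendsto (Real.GammaSeq_tendsto_Gamma s.re)
    ((GammaSeq_tendsto_Gamma s).norm.const_mul _) ?_
  filter_upwards [eventually_gt_atTop 0] with n hn
  have hQ : 0 < ∏ j ∈ Finset.range (n + 1), ‖s + j‖ :=
    Finset.prod_pos fun j _ => norm_pos_iff.2 fun h => by
      have := congrArg re h
      simp only [add_re, natCast_re, zero_re] at this
      linarith [(j.cast_nonneg : (0 : ℝ) ≤ j)]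
  have hnorm : ‖GammaSeq s n‖ = (n : ℝ) ^ s.re * n ! / ∏ j ∈ Finset.range (n + 1), ‖s + j‖ := by
    rw [GammaSeq, norm_div, norm_mul, norm_prod, ← ofReal_natCast,
      norm_cpow_eq_rpow_re_of_pos (by exact_mod_cast hn)]
    simp
  rw [hnorm, Real.GammaSeq]
  calc (n : ℝ) ^ s.re * n ! / ∏ j ∈ Finset.range (n + 1), (s.re + j)
      ≤ (n : ℝ) ^ s.re * n ! /
          ((∏ j ∈ Finset.range (n + 1), ‖s + j‖) / Real.exp (s.im ^ 2 * π ^ 2 / 12)) :=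
        div_le_div_of_nonneg_left (by positivity) (by positivity)
          ((div_le_iff₀' (Real.exp_pos _)).2 (prod_norm_add_natCast_le hs _))
    _ = _ := by field_simp

end Complex

theorem Real.tendsto_rpow_div_Gamma_atTop {K : ℝ} (hK : 0 ≤ K) :
    Tendsto (fun t => K ^ t / Gamma t) atTop (𝓝 0) := by
  set L := max K 1
  have hL : 1 ≤ L := le_max_right _ _
  have hfact : Tendsto (fun t : ℝ => L ^ 2 * (L ^ (⌊t⌋₊ - 1) / (⌊t⌋₊ - 1)! : ℝ)) atTop (𝓝 0) := by
    simpa using ((FloorSemiring.tendsto_pow_div_factorial_atTop L).comp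
      ((tendsto_sub_atTop_nat 1).comp tendsto_nat_floor_atTop)).const_mul (L ^ 2)
  refine squeeze_zero' ?_ ?_ hfact
  · filter_upwards [eventually_ge_atTop 0] with t ht
    exact div_nonneg (rpow_nonneg hK t) (Gamma_nonneg_of_nonneg ht)
  · filter_upwards [eventually_ge_atTop 2] with t ht
    set n := ⌊t⌋₊
    have hn : 2 ≤ n := Nat.le_floor (by exact_mod_cast ht)
    have hGamma : ((n - 1)! : ℝ) ≤ Gamma t := by
      rw [← Gamma_nat_eq_factorial, Nat.cast_sub (by omega), Nat.cast_one, sub_add_cancel]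
      exact Gamma_strictMonoOn_Ici.monotoneOn (by simpa using (by exact_mod_cast hn : (2:ℝ) ≤ n))
        ht (Nat.floor_le (by linarith))
    have hpow : K ^ t ≤ L ^ 2 * L ^ (n - 1) := by
      calc K ^ t ≤ L ^ t := rpow_le_rpow hK (le_max_left _ _) (by linarith)
        _ ≤ L ^ ((n + 1 : ℕ) : ℝ) :=
          rpow_le_rpow_of_exponent_le hL (by push_cast; exact (Nat.lt_floor_add_one t).le)
        _ = L ^ 2 * L ^ (n - 1) := by rw [rpow_natCast, ← pow_add]; congr 1; omega
    rw [mul_div_assoc']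
    exact div_le_div₀ (by positivity) hpow (by positivity) hGamma

theorem Real.eventually_rpow_div_Gamma_le_exp_neg {z : ℝ} (hz : 0 ≤ z) :
    ∀ᶠ t in atTop, z ^ t / Gamma t ≤ exp (-t) := by
  filter_upwards [(tendsto_rpow_div_Gamma_atTop (by positivity : 0 ≤ exp 1 * z)).eventually_le_const
    one_pos, eventually_ge_atTop 0] with t ht ht0
  have hsplit : z ^ t / Gamma t = (exp 1 * z) ^ t / Gamma t * exp (-t) := by
    rw [mul_rpow (exp_pos 1).le hz, exp_one_rpow, exp_neg]
    field_simp
  rw [hsplit]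
  exact mul_le_of_le_one_left (exp_pos _).le ht

theorem Differentiable.hasDerivAt_re_iteratedDeriv {F : ℂ → ℂ} (hF : Differentiable ℂ F) (k : ℕ)
    (x : ℝ) :
    HasDerivAt (fun y : ℝ => (iteratedDeriv k F y).re) (iteratedDeriv (k + 1) F x).re x := by
  rw [iteratedDeriv_succ]
  exact ((hF.contDiff (n := ⊤)).differentiable_iteratedDeriv k (by simp) x).hasDerivAt
    |>.real_of_complex

theorem Differentiable.iteratedDeriv_re_comp_ofReal {F : ℂ → ℂ} (hF : Differentiable ℂ F) (k : ℕ) :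
    iteratedDeriv k (fun y : ℝ => (F y).re) = fun y : ℝ => (iteratedDeriv k F y).re := by
  induction k with
  | zero => simp
  | succ k ih =>
    ext x
    rw [iteratedDeriv_succ, ih]
    exact (hF.hasDerivAt_re_iteratedDeriv k x).deriv

-- At the poles of `Γ`, `Complex.Gamma` and `Real.Gamma` both take the junk value `0`, which makes
-- this the entire function `w ↦ z^(α+w) · (1/Γ)(α+w+1)`.
noncomputable def volterraKernel (z α : ℝ) (w : ℂ) : ℂ :=
  (z : ℂ) ^ (α + w) / Complex.Gamma (α + w + 1)

section volterraKernel

variable {z : ℝ} (α : ℝ)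

theorem differentiable_volterraKernel (hz : z ≠ 0) : Differentiable ℂ (volterraKernel z α) := by
  have hshift : Differentiable ℂ fun w : ℂ => (α : ℂ) + w := differentiable_id.const_add _
  unfold volterraKernel
  simp_rw [div_eq_mul_inv]
  exact (hshift.const_cpow (.inl (Complex.ofReal_ne_zero.2 hz))).mul
      (Complex.differentiable_one_div_Gamma.comp (hshift.add_const 1))

theorem volterraKernel_ofReal (hz : 0 ≤ z) (x : ℝ) :
    volterraKernel z α x = ((z ^ (α + x) / Real.Gamma (α + x + 1) : ℝ) : ℂ) := by
  rw [Complex.ofReal_div, Complex.ofReal_cpow hz, ← Complex.Gamma_ofReal]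
  push_cast
  rfl

theorem norm_volterraKernel_le (hz : 0 < z) {x : ℝ} (hx : 2 ≤ α + x) {w : ℂ} (hw : ‖w - x‖ ≤ 1) :
    ‖volterraKernel z α w‖ ≤ exp (|log z| + π ^ 2 / 12) * (z ^ (α + x) / Real.Gamma (α + x)) := by
  have hre : |w.re - x| ≤ 1 := by simpa using (Complex.abs_re_le_norm (w - x)).trans hw
  have him : |w.im| ≤ 1 := by simpa using (Complex.abs_im_le_norm (w - x)).trans hw
  have hnum : ‖(z : ℂ) ^ (α + w)‖ ≤ exp |log z| * z ^ (α + x) := by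
    rw [Complex.norm_cpow_eq_rpow_re_of_pos hz]
    calc z ^ (α + w).re = z ^ (w.re - x) * z ^ (α + x) := by
          rw [← rpow_add hz]; congr 1; simp only [Complex.add_re, Complex.ofReal_re]; ring
      _ ≤ exp |log z| * z ^ (α + x) := by
          gcongr
          rw [rpow_def_of_pos hz, exp_le_exp]
          calc log z * (w.re - x) ≤ |log z| * |w.re - x| := by
                rw [← abs_mul]; exact le_abs_self _
            _ ≤ |log z| := mul_le_of_le_one_right (abs_nonneg _) hre
  have hden : Real.Gamma (α + x) ≤ exp (π ^ 2 / 12) * ‖Complex.Gamma (α + w + 1)‖ := by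
    have hs : (α + w + 1 : ℂ).re = α + w.re + 1 := by simp
    have him2 : (α + w + 1 : ℂ).im ^ 2 ≤ 1 := by simpa [sq_le_one_iff_abs_le_one] using him
    calc Real.Gamma (α + x) ≤ Real.Gamma (α + w + 1 : ℂ).re := by
          rw [hs]
          exact Real.Gamma_strictMonoOn_Ici.monotoneOn hx
            (by simp only [mem_Ici]; linarith [abs_le.1 hre]) (by linarith [abs_le.1 hre])
      _ ≤ exp ((α + w + 1 : ℂ).im ^ 2 * π ^ 2 / 12) * ‖Complex.Gamma (α + w + 1)‖ :=
          Complex.Gamma_re_le_exp_mul_norm_Gamma (by rw [hs]; linarith [abs_le.1 hre])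
      _ ≤ exp (π ^ 2 / 12) * ‖Complex.Gamma (α + w + 1)‖ := by
          gcongr
          nlinarith [pi_pos]
  rw [volterraKernel, norm_div]
  calc ‖(z : ℂ) ^ (α + w)‖ / ‖Complex.Gamma (α + w + 1)‖
      ≤ exp |log z| * z ^ (α + x) / (Real.Gamma (α + x) / exp (π ^ 2 / 12)) :=
        div_le_div₀ (by positivity) hnum (by positivity) ((div_le_iff₀' (exp_pos _)).2 hden)
    _ = _ := by rw [exp_add]; field_simp

theorem norm_iteratedDeriv_volterraKernel_le (hz : 0 < z) (m : ℕ) {x : ℝ} (hx : 2 ≤ α + x) :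
    ‖iteratedDeriv m (volterraKernel z α) x‖ ≤
      m ! * exp (|log z| + π ^ 2 / 12) * (z ^ (α + x) / Real.Gamma (α + x)) := by
  simpa [mul_assoc] using Complex.norm_iteratedDeriv_le_of_forall_mem_sphere_norm_le m one_pos
    (differentiable_volterraKernel α hz.ne').diffContOnCl
    fun w hw => norm_volterraKernel_le α hz hx (mem_sphere_iff_norm.1 hw).le

theorem isBigO_iteratedDeriv_volterraKernel (hz : 0 < z) (m : ℕ) :
    (fun x : ℝ => iteratedDeriv m (volterraKernel z α) x) =O[atTop] fun x => exp (-x) := by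
  refine IsBigO.of_bound (m ! * exp (|log z| + π ^ 2 / 12) * exp (-α)) ?_
  filter_upwards [(tendsto_atTop_add_const_left _ α tendsto_id).eventually
    (eventually_rpow_div_Gamma_le_exp_neg hz.le), eventually_ge_atTop (2 - α)] with x hdecay hx
  calc ‖iteratedDeriv m (volterraKernel z α) x‖
      ≤ m ! * exp (|log z| + π ^ 2 / 12) * (z ^ (α + x) / Real.Gamma (α + x)) :=
        norm_iteratedDeriv_volterraKernel_le α hz m (by linarith)
    _ ≤ m ! * exp (|log z| + π ^ 2 / 12) * exp (-(α + x)) := by gcongr; exact hdecay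
    _ = _ := by rw [norm_of_nonneg (exp_pos _).le, neg_add, exp_add (-α)]; ring

end volterraKernel

-- The left side is `μ(z, -n-1, α)` in its representation by `m = n + 1` integrations by parts.
theorem volterra_negative_integer_beta_general (n : ℕ) (z α : ℝ)
    (hz : 0 < z) :
    (-1 : ℝ) ^ (n + 1) *
        (∫ x in Ioi (0 : ℝ),
          iteratedDeriv (n + 1)
            (fun x : ℝ => z ^ (α + x) / Real.Gamma (α + x + 1)) x) =
      (-1 : ℝ) ^ n *
        iteratedDeriv n (fun x : ℝ => z ^ (α + x) / Real.Gamma (α + x + 1)) 0 := by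
  set F := volterraKernel z α
  have hF : Differentiable ℂ F := differentiable_volterraKernel α hz.ne'
  have hf : (fun x : ℝ => z ^ (α + x) / Real.Gamma (α + x + 1)) = fun x : ℝ => (F x).re := by
    funext x
    simp [F, volterraKernel_ofReal α hz.le]
  have hdecay (k : ℕ) : (fun x : ℝ => (iteratedDeriv k F x).re) =O[atTop] fun x => exp (-x) :=
    (isBigO_of_le _ fun x => by simpa using Complex.abs_re_le_norm _).trans
      (isBigO_iteratedDeriv_volterraKernel α hz k)
  have hcont : Continuous fun x : ℝ => (iteratedDeriv (n + 1) F x).re :=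
    continuous_iff_continuousAt.2 fun x => (hF.hasDerivAt_re_iteratedDeriv (n + 1) x).continuousAt
  have hFTC := integral_Ioi_of_hasDerivAt_of_tendsto' (a := 0)
    (fun x _ => hF.hasDerivAt_re_iteratedDeriv n x)
    (integrable_of_isBigO_exp_neg one_pos hcont.continuousOn (by simpa using hdecay (n + 1)))
    ((hdecay n).trans_tendsto tendsto_exp_neg_atTop_nhds_zero)
  rw [hf, hF.iteratedDeriv_re_comp_ofReal, hF.iteratedDeriv_re_comp_ofReal, hFTC, pow_succ]
  simp

/-- For `n ∈ ℕ` and `z > 0`, the analytically continued Volterra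
function at `β = −n−1`, given by the integration-by-parts representation
`μ(z,−n−1,α) = (−1)^{n+1} ∫₀^∞ d^{n+1}/dx^{n+1}( z^{α+x}/Γ(α+x+1) ) dx`
(the case `β = −n−1`, `m = n+1`, so `β+m = 0`), satisfies
`μ(z,−n−1,α) = (−1)^n dⁿ/dxⁿ[ z^{α+x}/Γ(α+x+1) ]` at `x = 0`. -/
theorem volterra_negative_integer_beta (n : ℕ) (z α : ℝ)
    (hz : 0 < z) (hα : -1 < α) :
    (-1 : ℝ) ^ (n + 1) *
        (∫ x in Ioi (0 : ℝ),
          iteratedDeriv (n + 1)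
            (fun x : ℝ => z ^ (α + x) / Real.Gamma (α + x + 1)) x) =
      (-1 : ℝ) ^ n *
        iteratedDeriv n (fun x : ℝ => z ^ (α + x) / Real.Gamma (α + x + 1)) 0 :=
  volterra_negative_integer_beta_general n z α hz
end
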